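/- arXiv:0707.3950 — 2 statements merged into one kernel-verified Lean document; each statement's English description precedes it below -/
import Mathlib

section
/- For every positive integer n, define λ_n by H_n = (1/2)·ln(2m) + γ + 1/(12m + 6/5) + λ_n, where m := n(n+1)/2. Then λ_n = 19/(25200·m^3) − ρ_n for some ρ_n with 0 < ρ_n < 43/(84000·m^4). -/
/-!
Put `ρ_n := 19 / (25200 m³) - λ_n`. Both `ρ_n` and `43 / (84000 m⁴) - ρ_n` tend to `0`, so it
suffices that both strictly decrease from `n = 1` on. Their successive differences are rational
functions of `n` minus `(1/2) log ((n + 2) / n) = artanh (1 / (n + 1))`. Replacing the logarithm by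
the first seven terms of the artanh series, with error at most `1 / (n (n + 1)¹⁴)`, leaves two
rational inequalities; after clearing denominators and substituting `n = 1 + x` they are
polynomial inequalities in `x ≥ 0` with positive coefficients.
-/

open Real Filter Finset Topology

lemma sum_range_pow_div_sub_sum_range_neg_pow_div (t : ℝ) (N : ℕ) :
    ∑ i ∈ range (2 * N), t ^ (i + 1) / (i + 1)
        - ∑ i ∈ range (2 * N), (-t) ^ (i + 1) / (i + 1)
      = 2 * ∑ i ∈ range N, t ^ (2 * i + 1) / (2 * i + 1) := by
  induction N with
  | zero => simp
  | succ N ih =>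
    rw [show 2 * (N + 1) = 2 * N + 1 + 1 by ring]
    simp only [sum_range_succ]
    rw [Odd.neg_pow ⟨N, rfl⟩, Even.neg_pow ⟨N + 1, by ring⟩]
    push_cast
    linear_combination ih

lemma abs_log_div_sub_two_mul_sum_range_le {t : ℝ} (ht : |t| < 1) (N : ℕ) :
    |log ((1 + t) / (1 - t)) - 2 * ∑ i ∈ range N, t ^ (2 * i + 1) / (2 * i + 1)|
      ≤ 2 * (|t| ^ (2 * N + 1) / (1 - |t|)) := by
  have hA := abs_log_sub_add_sum_range_le ht (2 * N)
  have hB := abs_log_sub_add_sum_range_le (abs_neg t ▸ ht) (2 * N)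
  rw [abs_neg, sub_neg_eq_add] at hB
  rw [log_div (by linarith [neg_abs_le t]) (by linarith [le_abs_self t]),
    ← sum_range_pow_div_sub_sum_range_neg_pow_div]
  calc _ = |((∑ i ∈ range (2 * N), (-t) ^ (i + 1) / (i + 1)) + log (1 + t))
          - ((∑ i ∈ range (2 * N), t ^ (i + 1) / (i + 1)) + log (1 - t))| := by
          congr 1; ring
    _ ≤ _ := (abs_sub _ _).trans (by linarith)

lemma abs_half_log_div_sub_sum_range_le {k : ℝ} (hk : 0 < k) (N : ℕ) :
    |1 / 2 * log ((k + 2) / k) - ∑ i ∈ range N, 1 / ((2 * i + 1) * (k + 1) ^ (2 * i + 1))|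
      ≤ 1 / (k * (k + 1) ^ (2 * N)) := by
  have ht : 0 < 1 / (k + 1) := by positivity
  have h := abs_log_div_sub_two_mul_sum_range_le
    (abs_of_pos ht ▸ (div_lt_one (by positivity)).2 (by linarith)) N
  have hk0 := hk.ne'
  have hk1 : k + 1 ≠ 0 := by positivity
  have e0 : 1 - 1 / (k + 1) = k / (k + 1) := by field_simp; ring
  have e1 : (1 + 1 / (k + 1)) / (k / (k + 1)) = (k + 2) / k := by field_simp; ring
  have e2 : (1 / (k + 1)) ^ (2 * N + 1) / (k / (k + 1)) = 1 / (k * (k + 1) ^ (2 * N)) := by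
    rw [one_div_pow, pow_succ]; field_simp
  have e3 (i : ℕ) : (1 / (k + 1)) ^ (2 * i + 1) / (2 * i + 1)
      = 1 / ((2 * i + 1) * (k + 1) ^ (2 * i + 1)) := by
    rw [div_pow, one_pow, div_div, mul_comm]
  rw [abs_of_pos ht, e0, e1, e2] at h
  simp only [e3] at h
  rw [show ∀ L S : ℝ, 1 / 2 * L - S = (L - 2 * S) / 2 by intros; ring, abs_div, abs_two]
  linarith

lemma lt_of_tendsto_of_succ_lt {α : Type*} [Preorder α] [TopologicalSpace α]
    [OrderClosedTopology α] {u : ℕ → α} {a : α} {n : ℕ} (hu : Tendsto u atTop (𝓝 a))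
    (h : ∀ k ≥ n, u (k + 1) < u k) : a < u n := by
  have hle : ∀ k ≥ n + 1, u k ≤ u (n + 1) := fun k hk ↦ by
    induction k, hk using Nat.le_induction with
    | base => exact le_rfl
    | succ k hk ih => exact (h k (by omega)).le.trans ih
  exact (le_of_tendsto hu (eventually_atTop.2 ⟨n + 1, hle⟩)).trans_lt (h n le_rfl)

noncomputable def triangular (x : ℝ) : ℝ := x * (x + 1) / 2

noncomputable def lodgeRemainder (n : ℕ) : ℝ :=
  19 / (25200 * triangular n ^ 3) - (harmonic n - (1 / 2 * log (2 * triangular n)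
    + eulerMascheroniConstant + 1 / (12 * triangular n + 6 / 5)))

noncomputable def lodgeRationalStep (k : ℝ) : ℝ :=
  1 / (k + 1) - (1 / (12 * triangular (k + 1) + 6 / 5) - 1 / (12 * triangular k + 6 / 5))
    + (19 / (25200 * triangular k ^ 3) - 19 / (25200 * triangular (k + 1) ^ 3))

lemma sum_add_lt_lodgeRationalStep {k : ℝ} (hk : 1 ≤ k) :
    ∑ i ∈ range 7, 1 / ((2 * i + 1) * (k + 1) ^ (2 * i + 1)) + 1 / (k * (k + 1) ^ 14)
      < lodgeRationalStep k := by
  -- over `x : NNReal` the cleared inequality is a polynomial in `x` with positive coefficients,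
  -- which `positivity` recognises
  obtain ⟨x, hx, rfl⟩ : ∃ x : ℝ, 0 ≤ x ∧ k = x + 1 := ⟨k - 1, by linarith, by ring⟩
  lift x to NNReal using hx
  simp only [sum_range_succ, sum_range_zero, lodgeRationalStep, triangular]
  rw [← sub_pos]
  field_simp
  ring_nf
  positivity

lemma lodgeRationalStep_lt {k : ℝ} (hk : 1 ≤ k) :
    lodgeRationalStep k < ∑ i ∈ range 7, 1 / ((2 * i + 1) * (k + 1) ^ (2 * i + 1))
      - 1 / (k * (k + 1) ^ 14)
      + (43 / (84000 * triangular k ^ 4) - 43 / (84000 * triangular (k + 1) ^ 4)) := by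
  obtain ⟨x, hx, rfl⟩ : ∃ x : ℝ, 0 ≤ x ∧ k = x + 1 := ⟨k - 1, by linarith, by ring⟩
  lift x to NNReal using hx
  simp only [sum_range_succ, sum_range_zero, lodgeRationalStep, triangular]
  rw [← sub_pos]
  field_simp
  ring_nf
  positivity

lemma log_two_mul_triangular {x : ℝ} (hx : x ≠ 0) (hx1 : x + 1 ≠ 0) :
    log (2 * triangular x) = log x + log (x + 1) := by
  rw [triangular, mul_div_cancel₀ _ two_ne_zero, log_mul hx hx1]

lemma lodgeRemainder_sub_succ {n : ℕ} (hn : n ≠ 0) :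
    lodgeRemainder n - lodgeRemainder (n + 1)
      = lodgeRationalStep n - 1 / 2 * log ((n + 2) / n) := by
  have hn0 : (n : ℝ) ≠ 0 := by exact_mod_cast hn
  simp only [lodgeRemainder, lodgeRationalStep, harmonic_succ]
  push_cast
  rw [log_two_mul_triangular hn0 (by positivity),
    log_two_mul_triangular (by positivity) (by positivity), log_div (by positivity) hn0]
  ring_nf

lemma lodgeRemainder_succ_lt {n : ℕ} (hn : 1 ≤ n) :
    lodgeRemainder (n + 1) < lodgeRemainder n := by
  have hlog := abs_le.1 (abs_half_log_div_sub_sum_range_le (k := n) (by positivity) 7)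
  have hrat := sum_add_lt_lodgeRationalStep (k := n) (by exact_mod_cast hn)
  rw [← sub_pos, lodgeRemainder_sub_succ (by omega)]
  linarith [hlog.1]

lemma lodgeRemainder_sub_succ_lt {n : ℕ} (hn : 1 ≤ n) :
    lodgeRemainder n - lodgeRemainder (n + 1)
      < 43 / (84000 * triangular n ^ 4) - 43 / (84000 * triangular (n + 1 : ℕ) ^ 4) := by
  have hlog := abs_le.1 (abs_half_log_div_sub_sum_range_le (k := n) (by positivity) 7)
  have hrat := lodgeRationalStep_lt (k := n) (by exact_mod_cast hn)
  rw [lodgeRemainder_sub_succ (by omega)]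
  push_cast
  linarith [hlog.2]

lemma tendsto_triangular_natCast_atTop : Tendsto (fun n : ℕ ↦ triangular n) atTop atTop := by
  have h : Tendsto (fun x : ℝ ↦ x * (x + 1)) atTop atTop :=
    tendsto_id.atTop_mul_atTop₀ (tendsto_atTop_add_const_right _ 1 tendsto_id)
  exact (h.atTop_div_const two_pos).comp tendsto_natCast_atTop_atTop

lemma tendsto_const_div_mul_triangular_pow (a b : ℝ) (hb : 0 < b) {p : ℕ} (hp : p ≠ 0) :
    Tendsto (fun n : ℕ ↦ a / (b * triangular n ^ p)) atTop (𝓝 0) :=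
  tendsto_const_nhds.div_atTop
    (((tendsto_pow_atTop hp).comp tendsto_triangular_natCast_atTop).const_mul_atTop hb)

lemma tendsto_lodgeRemainder : Tendsto lodgeRemainder atTop (𝓝 0) := by
  have hc : Tendsto (fun n : ℕ ↦ 1 / (12 * triangular n + 6 / 5)) atTop (𝓝 0) :=
    tendsto_const_nhds.div_atTop (tendsto_atTop_add_const_right _ _
      (tendsto_triangular_natCast_atTop.const_mul_atTop (by norm_num)))
  have ha := tendsto_const_div_mul_triangular_pow 19 25200 (by norm_num) three_ne_zero
  have hl := tendsto_log_nat_add_one_sub_log.const_mul (1 / 2)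
  have h := (((ha.add hc).sub tendsto_harmonic_sub_log).add_const eulerMascheroniConstant).add hl
  rw [show (0 : ℝ) + 0 - eulerMascheroniConstant + eulerMascheroniConstant + 1 / 2 * 0 = 0 by
    ring] at h
  refine h.congr' ?_
  filter_upwards [eventually_ne_atTop 0] with n hn
  rw [lodgeRemainder, log_two_mul_triangular (by exact_mod_cast hn) (by positivity)]
  ring

theorem lodge_lambda_refined (n : ℕ) (hn : 1 ≤ n) :
    ∃ ρ : ℝ, 0 < ρ ∧ ρ < 43 / (84000 * ((n * (n + 1) : ℝ) / 2) ^ 4) ∧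
      (harmonic n : ℝ) -
          ((1 / 2) * Real.log (2 * ((n * (n + 1) : ℝ) / 2)) + Real.eulerMascheroniConstant +
            1 / (12 * ((n * (n + 1) : ℝ) / 2) + 6 / 5)) =
        19 / (25200 * ((n * (n + 1) : ℝ) / 2) ^ 3) - ρ := by
  refine ⟨lodgeRemainder n, ?_, ?_, by rw [lodgeRemainder, triangular]; ring⟩
  · exact lt_of_tendsto_of_succ_lt tendsto_lodgeRemainder
      fun k hk ↦ lodgeRemainder_succ_lt (hn.trans hk)
  · have h := lt_of_tendsto_of_succ_lt
      ((tendsto_const_div_mul_triangular_pow 43 84000 (by norm_num) four_ne_zero).sub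
        tendsto_lodgeRemainder)
      fun k hk ↦ by linarith [lodgeRemainder_sub_succ_lt (hn.trans hk)]
    rw [sub_zero, sub_pos] at h
    exact h
end

section
/- For every real x > 0: 1/(24x^2) − 1/(24x^3) + 23/(960x^4) − 1/(160x^5) − 11/(8064x^6) − 1/(896x^7) < Ψ(x+1) − ln(x + 1/2) < 1/(24x^2) − 1/(24x^3) + 23/(960x^4) − 1/(160x^5) − 11/(8064x^6) − 1/(896x^7) + 143/(30720x^8), where Ψ is the digamma function. -/
/-!
Write `F x = Ψ(x + 1) - log (x + 1/2)`. The recurrence `Ψ(x + 1) = Ψ(x) + 1/x` gives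
`F x - F (x + 1) = g x := log (x + 3/2) - log (x + 1/2) - 1/(x + 1)`, and convexity of `log ∘ Γ`
traps `Ψ(x + 1)` between `log x` and `log (x + 1)`, so `F → 0`. Hence any `R → 0` with
`R x - R (x + 1) < g x` for all `x > 0` satisfies `R < F` (telescope `F - R`), and symmetrically.
For the truncated expansions `P` and `Q = P + 143/(30720 x⁸)`, the differences `g - ΔP` and
`ΔQ - g` tend to `0` and their derivatives are `-N/D` with `N` a polynomial with positive
coefficients, so they are positive.
-/

open Real

/-- The digamma function `Ψ(x) = Γ'(x)/Γ(x) = (log ∘ Γ)'(x)`. -/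
noncomputable def digamma (x : ℝ) : ℝ := deriv (fun y : ℝ => Real.log (Real.Gamma y)) x

open Filter Set Topology

theorem pos_of_apply_add_one_lt_of_tendsto {f : ℝ → ℝ} {a : ℝ}
    (hf : ∀ t, a < t → f (t + 1) < f t) (hlim : Tendsto f atTop (𝓝 0)) {t : ℝ} (ht : a < t) :
    0 < f t := by
  have hanti : Antitone fun n : ℕ => f (t + 1 + n) := antitone_nat_of_succ_le fun n => by
    have := hf (t + 1 + n) (by linarith [n.cast_nonneg (α := ℝ)])
    push_cast
    rw [← add_assoc]
    exact this.le
  have h0 : 0 ≤ f (t + 1) := by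
    simpa using hanti.le_of_tendsto
      (hlim.comp (tendsto_atTop_add_const_left _ _ tendsto_natCast_atTop_atTop)) 0
  linarith [hf t ht]

theorem pos_of_hasDerivAt_neg_of_tendsto {f f' : ℝ → ℝ} {a : ℝ}
    (hf : ∀ t, a < t → HasDerivAt f (f' t) t) (hf' : ∀ t, a < t → f' t < 0)
    (hlim : Tendsto f atTop (𝓝 0)) {t : ℝ} (ht : a < t) : 0 < f t := by
  have hanti : StrictAntiOn f (Ioi a) := by
    refine strictAntiOn_of_hasDerivWithinAt_neg (f' := f') (convex_Ioi a)
      (fun s hs => (hf s hs).continuousAt.continuousWithinAt) (fun s hs => ?_)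
      (fun s hs => ?_)
    · rw [interior_Ioi] at hs ⊢
      exact (hf s hs).hasDerivWithinAt
    · exact hf' s (by simpa using hs)
  refine pos_of_apply_add_one_lt_of_tendsto (fun s hs => hanti hs ?_ (by linarith)) hlim ht
  exact mem_Ioi.mpr (by linarith)

theorem tendsto_comp_add_one {f : ℝ → ℝ} {l : ℝ} (hf : Tendsto f atTop (𝓝 l)) :
    Tendsto (fun x => f (x + 1)) atTop (𝓝 l) :=
  hf.comp (tendsto_atTop_add_const_right _ 1 tendsto_id)

theorem hasDerivAt_const_div_mul_pow (c d : ℝ) (k : ℕ) {t : ℝ} (ht : t ≠ 0) :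
    HasDerivAt (fun x : ℝ => c / (d * x ^ k)) (-(c * k) / (d * t ^ (k + 1))) t := by
  have hzpow : (fun x : ℝ => c / (d * x ^ k)) = fun x => c / d * x ^ (-(k : ℤ)) := by
    ext x
    rw [zpow_neg, zpow_natCast, div_mul_eq_div_div, div_eq_mul_inv]
  rw [hzpow]
  refine ((hasDerivAt_zpow (-(k : ℤ)) t (Or.inl ht)).const_mul (c / d)).congr_deriv ?_
  rw [show -(k : ℤ) - 1 = -((k + 1 : ℕ) : ℤ) by push_cast; ring, zpow_neg, zpow_natCast]
  simp only [div_eq_mul_inv, mul_inv]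
  push_cast
  ring

theorem tendsto_const_div_mul_pow (c : ℝ) {d : ℝ} (hd : 0 < d) {k : ℕ} (hk : k ≠ 0) :
    Tendsto (fun x : ℝ => c / (d * x ^ k)) atTop (𝓝 0) :=
  tendsto_const_nhds.div_atTop ((tendsto_pow_atTop hk).const_mul_atTop hd)

theorem log_Gamma_add_one {x : ℝ} (hx : 0 < x) :
    log (Gamma (x + 1)) = log x + log (Gamma x) := by
  rw [Gamma_add_one hx.ne', log_mul hx.ne' (Gamma_pos_of_pos hx).ne']

theorem differentiableAt_log_Gamma {x : ℝ} (hx : 0 < x) :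
    DifferentiableAt ℝ (fun y => log (Gamma y)) x :=
  (differentiableAt_Gamma fun m => by linarith [m.cast_nonneg (α := ℝ)]).log
    (Gamma_pos_of_pos hx).ne'

theorem digamma_add_one {x : ℝ} (hx : 0 < x) : digamma (x + 1) = digamma x + x⁻¹ := by
  have hshift : (fun y => log (Gamma (y + 1))) =ᶠ[𝓝 x] fun y => log y + log (Gamma y) := by
    filter_upwards [Ioi_mem_nhds hx] with y hy using log_Gamma_add_one hy
  rw [digamma, ← deriv_comp_add_const, hshift.deriv_eq,
    deriv_fun_add (differentiableAt_log hx.ne') (differentiableAt_log_Gamma hx), deriv_log,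
    digamma, add_comm]

theorem digamma_add_one_mem_Icc {x : ℝ} (hx : 0 < x) :
    digamma (x + 1) ∈ Icc (log x) (log (x + 1)) := by
  have hx1 : 0 < x + 1 := by linarith
  have hd : DifferentiableAt ℝ (log ∘ Gamma) (x + 1) := differentiableAt_log_Gamma hx1
  have hl := convexOn_log_Gamma.slope_le_deriv (y := x + 1) hx hx1 (by linarith) hd
  have hu := convexOn_log_Gamma.deriv_le_slope (y := x + 1 + 1) hx1
    (mem_Ioi.mpr (by linarith)) (by linarith) hd
  simp only [slope_def_field, Function.comp_apply, add_sub_cancel_left, div_one,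
    log_Gamma_add_one hx, log_Gamma_add_one hx1, add_sub_cancel_right] at hl hu
  exact ⟨hl, hu⟩

noncomputable def digammaRemainder (x : ℝ) : ℝ := digamma (x + 1) - log (x + 1 / 2)

noncomputable def digammaRemainderStep (x : ℝ) : ℝ :=
  log (x + 3 / 2) - log (x + 1 / 2) - (x + 1)⁻¹

theorem digammaRemainder_sub_add_one {x : ℝ} (hx : 0 < x) :
    digammaRemainder x - digammaRemainder (x + 1) = digammaRemainderStep x := by
  rw [digammaRemainder, digammaRemainder, digammaRemainderStep,
    digamma_add_one (by linarith : 0 < x + 1), show x + 1 + 1 / 2 = x + 3 / 2 by ring]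
  ring

theorem tendsto_digammaRemainder : Tendsto digammaRemainder atTop (𝓝 0) := by
  have hlower : Tendsto (fun x => log x - log (x + 1 / 2)) atTop (𝓝 0) := by
    simpa using (tendsto_log_comp_add_sub_log (1 / 2)).neg
  have hupper : Tendsto (fun x => log (x + 1) - log (x + 1 / 2)) atTop (𝓝 0) := by
    simpa using (tendsto_log_comp_add_sub_log 1).sub (tendsto_log_comp_add_sub_log (1 / 2))
  refine tendsto_of_tendsto_of_tendsto_of_le_of_le' hlower hupper ?_ ?_ <;>
    filter_upwards [eventually_gt_atTop 0] with x hx <;>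
    have := digamma_add_one_mem_Icc hx <;>
    simp only [digammaRemainder, mem_Icc] at this ⊢ <;>
    linarith

theorem hasDerivAt_digammaRemainderStep {t : ℝ} (ht : 0 < t) :
    HasDerivAt digammaRemainderStep ((t + 3 / 2)⁻¹ - (t + 1 / 2)⁻¹ + ((t + 1) ^ 2)⁻¹) t := by
  refine (((((hasDerivAt_id t).add_const (3 / 2)).log (by positivity)).sub
    (((hasDerivAt_id t).add_const (1 / 2)).log (by positivity))).sub
    (((hasDerivAt_id t).add_const 1).inv (by positivity))).congr_deriv ?_
  simp only [id, one_div]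
  ring

theorem tendsto_digammaRemainderStep : Tendsto digammaRemainderStep atTop (𝓝 0) := by
  have h := ((tendsto_log_comp_add_sub_log (3 / 2)).sub
    (tendsto_log_comp_add_sub_log (1 / 2))).sub (tendsto_comp_add_one tendsto_inv_atTop_zero)
  simp only [sub_zero] at h
  exact h.congr fun x => by rw [digammaRemainderStep]; ring

theorem lt_digammaRemainder {R : ℝ → ℝ} (hR : Tendsto R atTop (𝓝 0))
    (hstep : ∀ t, 0 < t → R t - R (t + 1) < digammaRemainderStep t) {x : ℝ} (hx : 0 < x) :
    R x < digammaRemainder x := by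
  refine sub_pos.mp (pos_of_apply_add_one_lt_of_tendsto
    (f := fun t => digammaRemainder t - R t) (fun t ht => ?_) ?_ hx)
  · linarith [hstep t ht, digammaRemainder_sub_add_one ht]
  · simpa using tendsto_digammaRemainder.sub hR

theorem digammaRemainder_lt {R : ℝ → ℝ} (hR : Tendsto R atTop (𝓝 0))
    (hstep : ∀ t, 0 < t → digammaRemainderStep t < R t - R (t + 1)) {x : ℝ} (hx : 0 < x) :
    digammaRemainder x < R x := by
  refine sub_pos.mp (pos_of_apply_add_one_lt_of_tendsto
    (f := fun t => R t - digammaRemainder t) (fun t ht => ?_) ?_ hx)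
  · linarith [hstep t ht, digammaRemainder_sub_add_one ht]
  · simpa using hR.sub tendsto_digammaRemainder

noncomputable def psiLower (x : ℝ) : ℝ :=
  1 / (24 * x ^ 2) - 1 / (24 * x ^ 3) + 23 / (960 * x ^ 4) - 1 / (160 * x ^ 5) -
    11 / (8064 * x ^ 6) - 1 / (896 * x ^ 7)

noncomputable def psiUpper (x : ℝ) : ℝ := psiLower x + 143 / (30720 * x ^ 8)

theorem hasDerivAt_psiLower {t : ℝ} (ht : t ≠ 0) :
    HasDerivAt psiLower (-1 / (12 * t ^ 3) + 1 / (8 * t ^ 4) - 23 / (240 * t ^ 5) +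
      1 / (32 * t ^ 6) + 11 / (1344 * t ^ 7) + 1 / (128 * t ^ 8)) t := by
  refine ((((((hasDerivAt_const_div_mul_pow 1 24 2 ht).sub
    (hasDerivAt_const_div_mul_pow 1 24 3 ht)).add
    (hasDerivAt_const_div_mul_pow 23 960 4 ht)).sub
    (hasDerivAt_const_div_mul_pow 1 160 5 ht)).sub
    (hasDerivAt_const_div_mul_pow 11 8064 6 ht)).sub
    (hasDerivAt_const_div_mul_pow 1 896 7 ht)).congr_deriv ?_
  field_simp
  ring

theorem hasDerivAt_psiUpper {t : ℝ} (ht : t ≠ 0) :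
    HasDerivAt psiUpper (-1 / (12 * t ^ 3) + 1 / (8 * t ^ 4) - 23 / (240 * t ^ 5) +
      1 / (32 * t ^ 6) + 11 / (1344 * t ^ 7) + 1 / (128 * t ^ 8) - 143 / (3840 * t ^ 9)) t := by
  refine ((hasDerivAt_psiLower ht).add
    (hasDerivAt_const_div_mul_pow 143 30720 8 ht)).congr_deriv ?_
  field_simp
  ring

theorem tendsto_psiLower : Tendsto psiLower atTop (𝓝 0) := by
  have h := (((((tendsto_const_div_mul_pow 1 (by norm_num : (0 : ℝ) < 24) two_ne_zero).sub
    (tendsto_const_div_mul_pow 1 (by norm_num : (0 : ℝ) < 24) three_ne_zero)).add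
    (tendsto_const_div_mul_pow 23 (by norm_num : (0 : ℝ) < 960) four_ne_zero)).sub
    (tendsto_const_div_mul_pow 1 (by norm_num : (0 : ℝ) < 160) (by norm_num : 5 ≠ 0))).sub
    (tendsto_const_div_mul_pow 11 (by norm_num : (0 : ℝ) < 8064) (by norm_num : 6 ≠ 0))).sub
    (tendsto_const_div_mul_pow 1 (by norm_num : (0 : ℝ) < 896) (by norm_num : 7 ≠ 0))
  simp only [sub_zero, add_zero] at h
  exact h

theorem tendsto_psiUpper : Tendsto psiUpper atTop (𝓝 0) := by
  have h := tendsto_psiLower.add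
    (tendsto_const_div_mul_pow 143 (by norm_num : (0 : ℝ) < 30720) (by norm_num : 8 ≠ 0))
  rw [add_zero] at h
  exact h

theorem psiLower_sub_lt_digammaRemainderStep {t : ℝ} (ht : 0 < t) :
    psiLower t - psiLower (t + 1) < digammaRemainderStep t := by
  have hderiv : ∀ s, 0 < s →
      HasDerivAt (fun s => digammaRemainderStep s - (psiLower s - psiLower (s + 1)))
        (-(315 * s + 4005 * s ^ 2 + 24430 * s ^ 3 + 91556 * s ^ 4 + 225970 * s ^ 5 +
          372518 * s ^ 6 + 404152 * s ^ 7 + 275828 * s ^ 8 + 107058 * s ^ 9 + 18018 * s ^ 10) /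
          (13440 * (2 * s + 3) * (2 * s + 1) * s ^ 9 * (s + 1) ^ 9)) s := fun s hs => by
    refine ((hasDerivAt_digammaRemainderStep hs).sub ((hasDerivAt_psiLower hs.ne').sub
      ((hasDerivAt_psiLower (by positivity)).comp_add_const s 1))).congr_deriv ?_
    field_simp
    ring
  have hlim : Tendsto (fun s => digammaRemainderStep s - (psiLower s - psiLower (s + 1)))
      atTop (𝓝 0) := by
    simpa using tendsto_digammaRemainderStep.sub
      (tendsto_psiLower.sub (tendsto_comp_add_one tendsto_psiLower))
  exact sub_pos.mp (pos_of_hasDerivAt_neg_of_tendsto hderiv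
    (fun s hs => div_neg_of_neg_of_pos (neg_neg_of_pos (by positivity)) (by positivity)) hlim ht)

theorem digammaRemainderStep_lt_psiUpper_sub {t : ℝ} (ht : 0 < t) :
    digammaRemainderStep t < psiUpper t - psiUpper (t + 1) := by
  have hderiv : ∀ s, 0 < s →
      HasDerivAt (fun s => psiUpper s - psiUpper (s + 1) - digammaRemainderStep s)
        (-(3003 + 34405 * s + 176174 * s ^ 2 + 527716 * s ^ 3 + 1012082 * s ^ 4 +
          1271782 * s ^ 5 + 1020728 * s ^ 6 + 476980 * s ^ 7 + 99995 * s ^ 8 + 2100 * s ^ 9) /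
          (26880 * (2 * s + 3) * (2 * s + 1) * s ^ 9 * (s + 1) ^ 9)) s := fun s hs => by
    refine (((hasDerivAt_psiUpper hs.ne').sub
      ((hasDerivAt_psiUpper (by positivity)).comp_add_const s 1)).sub
      (hasDerivAt_digammaRemainderStep hs)).congr_deriv ?_
    field_simp
    ring
  have hlim : Tendsto (fun s => psiUpper s - psiUpper (s + 1) - digammaRemainderStep s)
      atTop (𝓝 0) := by
    simpa using (tendsto_psiUpper.sub (tendsto_comp_add_one tendsto_psiUpper)).sub
      tendsto_digammaRemainderStep
  exact sub_pos.mp (pos_of_hasDerivAt_neg_of_tendsto hderiv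
    (fun s hs => div_neg_of_neg_of_pos (neg_neg_of_pos (by positivity)) (by positivity)) hlim ht)

theorem digamma_half_bounds (x : ℝ) (hx : 0 < x) :
    1 / (24 * x ^ 2) - 1 / (24 * x ^ 3) + 23 / (960 * x ^ 4) - 1 / (160 * x ^ 5) -
        11 / (8064 * x ^ 6) - 1 / (896 * x ^ 7) <
      digamma (x + 1) - Real.log (x + 1 / 2) ∧
    digamma (x + 1) - Real.log (x + 1 / 2) <
      1 / (24 * x ^ 2) - 1 / (24 * x ^ 3) + 23 / (960 * x ^ 4) - 1 / (160 * x ^ 5) -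
        11 / (8064 * x ^ 6) - 1 / (896 * x ^ 7) + 143 / (30720 * x ^ 8) :=
  ⟨lt_digammaRemainder tendsto_psiLower (fun _ => psiLower_sub_lt_digammaRemainderStep) hx,
    digammaRemainder_lt tendsto_psiUpper (fun _ => digammaRemainderStep_lt_psiUpper_sub) hx⟩
end
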